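/- Let m be a positive integer with m ≡ 0 or 3 (mod 4), and for 1 ≤ s ≤ r ≤ m+1 define h̃_{r,s}^{(m)} = h_{m+2−r,s}^{(m)} when m ≡ 0 (mod 4) and h̃_{r,s}^{(m)} = h_{r,m+3−s}^{(m)} when m ≡ 3 (mod 4). Then the rational number Δ = h_{r,s}^{(m)} − h̃_{r,s}^{(m)} lies in ℤ ∪ (1/2 + ℤ); more precisely: (1) when m ≡ 0 (mod 4), Δ ∈ ℤ if r is odd and Δ ∈ 1/2 + ℤ if r is even; (2) when m ≡ 3 (mod 4), Δ ∈ ℤ if s is odd and Δ ∈ 1/2 + ℤ if s is even; (3) Δ = 0 when r = (m+2)/2 if m ≡ 0 (mod 4), or when s = (m+3)/2 if m ≡ 3 (mod 4). -/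
import Mathlib


/-!
Formalization of Lemma 2.11a of Höhn–Lam–Yamauchi, "McKay's E₆ observation on the
largest Fischer group" (arXiv:1002.1777).
-/

/-- The highest weights `h_{r,s}^{(m)}` of the unitary Virasoro series, as rationals. -/
def hq (m r s : ℕ) : ℚ :=
  (((r : ℚ) * ((m : ℚ) + 3) - (s : ℚ) * ((m : ℚ) + 2)) ^ 2 - 1) /
    (4 * ((m : ℚ) + 2) * ((m : ℚ) + 3))

/-- The weight `h̃_{r,s}^{(m)}`: `h_{m+2-r,s}^{(m)}` when `m ≡ 0 (mod 4)` and
`h_{r,m+3-s}^{(m)}` when `m ≡ 3 (mod 4)`. -/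
def hqt (m r s : ℕ) : ℚ :=
  if m % 4 = 0 then hq m (m + 2 - r) s else hq m r (m + 3 - s)

lemma delta_eq (m r s : ℕ) (hsr : s ≤ r) (hr : r ≤ m + 1) :
    hq m r s - hqt m r s = ((2 * r : ℚ) - m - 2) * ((m : ℚ) + 3 - 2 * s) / 4 := by
  have h2 : ((m : ℚ) + 2) ≠ 0 := by positivity
  have h3 : ((m : ℚ) + 3) ≠ 0 := by positivity
  unfold hqt
  split <;> unfold hq
  · have hrc : ((m + 2 - r : ℕ) : ℚ) = (m : ℚ) + 2 - r := by
      push_cast [Nat.cast_sub (by omega : r ≤ m + 2)]; ring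
    rw [hrc]; field_simp; ring
  · have hsc : ((m + 3 - s : ℕ) : ℚ) = (m : ℚ) + 3 - s := by
      push_cast [Nat.cast_sub (by omega : s ≤ m + 3)]; ring
    rw [hsc]; field_simp; ring

/-- **Lemma 2.11a.** For `m ≡ 0` or `3 (mod 4)` and `1 ≤ s ≤ r ≤ m + 1`, the difference
`Δ = h_{r,s}^{(m)} − h̃_{r,s}^{(m)}` lies in `ℤ ∪ (1/2 + ℤ)`. More precisely:
(1) when `m ≡ 0 (mod 4)`, `Δ ∈ ℤ` if `r` is odd and `Δ ∈ 1/2 + ℤ` if `r` is even;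
(2) when `m ≡ 3 (mod 4)`, `Δ ∈ ℤ` if `s` is odd and `Δ ∈ 1/2 + ℤ` if `s` is even;
(3) `Δ = 0` when `r = (m+2)/2` (for `m ≡ 0 (mod 4)`), resp. `s = (m+3)/2`
(for `m ≡ 3 (mod 4)`). -/
theorem delta_integral_or_half_integral (m r s : ℕ) (hm : 0 < m)
    (hm4 : m % 4 = 0 ∨ m % 4 = 3) (hs : 1 ≤ s) (hsr : s ≤ r) (hr : r ≤ m + 1) :
    ((∃ k : ℤ, hq m r s - hqt m r s = k) ∨
      (∃ k : ℤ, hq m r s - hqt m r s = 1 / 2 + k)) ∧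
    (m % 4 = 0 →
      (Odd r → ∃ k : ℤ, hq m r s - hqt m r s = k) ∧
      (Even r → ∃ k : ℤ, hq m r s - hqt m r s = 1 / 2 + k)) ∧
    (m % 4 = 3 →
      (Odd s → ∃ k : ℤ, hq m r s - hqt m r s = k) ∧
      (Even s → ∃ k : ℤ, hq m r s - hqt m r s = 1 / 2 + k)) ∧
    ((m % 4 = 0 → 2 * r = m + 2 → hq m r s - hqt m r s = 0) ∧
     (m % 4 = 3 → 2 * s = m + 3 → hq m r s - hqt m r s = 0)) := by
  have hΔ := delta_eq m r s hsr hr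
  -- Case m ≡ 0 (mod 4)
  have case0 : m % 4 = 0 →
      (Odd r → ∃ k : ℤ, hq m r s - hqt m r s = k) ∧
      (Even r → ∃ k : ℤ, hq m r s - hqt m r s = 1 / 2 + k) := by
    intro h0
    obtain ⟨a, rfl⟩ : ∃ a, m = 4 * a := ⟨m / 4, by omega⟩
    constructor
    · rintro ⟨b, rfl⟩
      exact ⟨((b : ℤ) - a) * (4 * a + 3 - 2 * s), by rw [hΔ]; push_cast; ring⟩
    · rintro ⟨b, rfl⟩
      exact ⟨2 * ((b : ℤ) - a - 1) * (2 * a + 1 - s) + ((b : ℤ) - a - 1)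
        + (2 * (a : ℤ) + 1 - s), by rw [hΔ]; push_cast; ring⟩
  -- Case m ≡ 3 (mod 4)
  have case3 : m % 4 = 3 →
      (Odd s → ∃ k : ℤ, hq m r s - hqt m r s = k) ∧
      (Even s → ∃ k : ℤ, hq m r s - hqt m r s = 1 / 2 + k) := by
    intro h3
    obtain ⟨a, rfl⟩ : ∃ a, m = 4 * a + 3 := ⟨m / 4, by omega⟩
    constructor
    · rintro ⟨c, rfl⟩
      exact ⟨(2 * (r : ℤ) - 4 * a - 5) * ((a : ℤ) + 1 - c),
        by rw [hΔ]; push_cast; ring⟩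
    · rintro ⟨c, rfl⟩
      exact ⟨2 * ((r : ℤ) - 2 * a - 3) * ((a : ℤ) + 1 - c) + ((r : ℤ) - 2 * a - 3)
        + ((a : ℤ) + 1 - c), by rw [hΔ]; push_cast; ring⟩
  refine ⟨?_, case0, case3, ?_, ?_⟩
  · rcases hm4 with h0 | h3
    · rcases Nat.even_or_odd r with he | ho
      · exact Or.inr ((case0 h0).2 he)
      · exact Or.inl ((case0 h0).1 ho)
    · rcases Nat.even_or_odd s with he | ho
      · exact Or.inr ((case3 h3).2 he)
      · exact Or.inl ((case3 h3).1 ho)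
  · intro _ hrm
    have : (2 * r : ℚ) = (m : ℚ) + 2 := by exact_mod_cast congrArg (Nat.cast : ℕ → ℚ) hrm
    rw [hΔ, this]; ring
  · intro _ hsm
    have : (2 * s : ℚ) = (m : ℚ) + 3 := by exact_mod_cast congrArg (Nat.cast : ℕ → ℚ) hsm
    rw [hΔ]
    have h : ((m : ℚ) + 3 - 2 * s) = 0 := by rw [← this]; push_cast; ring
    rw [show ((m:ℚ)+3-2*(s:ℚ)) = 0 from by push_cast at this ⊢; linarith]
    ring
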